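/- arXiv:2310.14327 — 4 statements merged into one kernel-verified Lean document; each statement's English description precedes it below -/
import Mathlib

section
/- With the notation of the context, there exist a constant c > 0 and B₀ such that J(B) ≥ c·B for every integer B ≥ B₀. -/
lemma icc_card_ge (l u : ℝ) (hl : 0 ≤ l) :
    u - l - 1 ≤ ((Finset.Icc ⌈l⌉₊ ⌊u⌋₊).card : ℝ) := by
  rcases le_or_gt ⌈l⌉₊ ⌊u⌋₊ with h | h
  · rw [Nat.card_Icc]
    have h1 : (⌈l⌉₊ : ℝ) < l + 1 := Nat.ceil_lt_add_one hl
    have h2 : u - 1 < (⌊u⌋₊ : ℝ) := by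
      rcases le_or_gt 0 u with hu | hu
      · exact Nat.sub_one_lt_floor u
      · have h3 : (0:ℝ) ≤ ((⌊u⌋₊ : ℕ) : ℝ) := Nat.cast_nonneg _
        linarith
    have h3 : ⌈l⌉₊ ≤ ⌊u⌋₊ + 1 := h.trans (Nat.le_succ _)
    rw [Nat.cast_sub h3]
    push_cast
    linarith
  · rw [Finset.Icc_eq_empty_of_lt h, Finset.card_empty]
    have h1 : u < (⌊u⌋₊:ℝ) + 1 := Nat.lt_floor_add_one u
    have h2 : (⌈l⌉₊ : ℝ) < l + 1 := Nat.ceil_lt_add_one hl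
    have h3 : (⌊u⌋₊:ℝ) + 1 ≤ (⌈l⌉₊ : ℝ) := by exact_mod_cast h
    push_cast
    linarith

set_option maxHeartbeats 2000000 in
theorem stmt_9 (β₁ β₂ β₃ : ℤ)
    (hβ₁ : β₁ = 1 ∨ β₁ = -1) (hβ₂ : β₂ = 1 ∨ β₂ = -1) (hβ₃ : β₃ = 1 ∨ β₃ = -1)
    (γ₁ γ₂ γ₃ γ₄ : ℝ) (hγ₁ : 0 < γ₁) (hγ₂ : 0 < γ₂) (hγ₃ : 0 < γ₃) (hγ₄ : 0 < γ₄)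
    (hrel : 2 * (β₁ : ℝ) * γ₁ + (β₂ : ℝ) * γ₂ ^ 2 + (β₃ : ℝ) * γ₃ * γ₄ = 0)
    (δ : ℝ) (hδ : 0 < δ) (hδ1 : δ < 1) :
    ∃ c : ℝ, 0 < c ∧ ∃ B₀ : ℕ, ∀ B : ℕ, B₀ ≤ B →
      c * B ≤
        (({m : ℕ × ℕ × ℕ × ℕ |
            0 < m.1 ∧ 0 < m.2.1 ∧ 0 < m.2.2.1 ∧ 0 < m.2.2.2 ∧
            (γ₁ * (1 - δ) * (B : ℝ) ^ ((2 : ℝ) / 3) ≤ (m.1 : ℝ) ∧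
              (m.1 : ℝ) ≤ γ₁ * (1 + δ) * (B : ℝ) ^ ((2 : ℝ) / 3)) ∧
            (γ₂ * Real.sqrt (1 - δ) * (B : ℝ) ^ ((1 : ℝ) / 3) ≤ (m.2.1 : ℝ) ∧
              (m.2.1 : ℝ) ≤ γ₂ * Real.sqrt (1 + δ) * (B : ℝ) ^ ((1 : ℝ) / 3)) ∧
            (γ₃ * Real.sqrt (1 - δ) * (B : ℝ) ^ ((1 : ℝ) / 3) ≤ (m.2.2.1 : ℝ) ∧
              (m.2.2.1 : ℝ) ≤ γ₃ * Real.sqrt (1 + δ) * (B : ℝ) ^ ((1 : ℝ) / 3)) ∧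
            (γ₄ * Real.sqrt (1 - δ) * (B : ℝ) ^ ((1 : ℝ) / 3) ≤ (m.2.2.2 : ℝ) ∧
              (m.2.2.2 : ℝ) ≤ γ₄ * Real.sqrt (1 + δ) * (B : ℝ) ^ ((1 : ℝ) / 3)) ∧
            2 * β₁ * (m.1 : ℤ) + β₂ * (m.2.1 : ℤ) ^ 2 + β₃ * (m.2.2.1 : ℤ) * (m.2.2.2 : ℤ) = 0}).ncard
          : ℝ) := by
  have hγ22 : (0:ℝ) < γ₂^2 := by positivity
  have hγ34 : (0:ℝ) < γ₃*γ₄ := mul_pos hγ₃ hγ₄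
  set P : ℝ := γ₂^2 + γ₃*γ₄ with hPdef
  have hP : 0 < P := by positivity
  set ε : ℝ := min δ (δ*γ₁/P) with hεdef
  have hε : 0 < ε := lt_min hδ (by positivity)
  have hεδ : ε ≤ δ := min_le_left _ _
  have hε1 : ε < 1 := lt_of_le_of_lt hεδ hδ1
  have hεP : ε * P ≤ δ * γ₁ := by
    have h := min_le_right δ (δ*γ₁/P)
    rw [hεdef]
    calc min δ (δ*γ₁/P) * P ≤ (δ*γ₁/P) * P := mul_le_mul_of_nonneg_right h hP.le
    _ = δ*γ₁ := by field_simp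
  set sm : ℝ := Real.sqrt (1 - ε) with hsmdef
  set sp : ℝ := Real.sqrt (1 + ε) with hspdef
  have hsm2 : sm^2 = 1 - ε := Real.sq_sqrt (by linarith)
  have hsp2 : sp^2 = 1 + ε := Real.sq_sqrt (by linarith)
  have hsm0 : 0 < sm := Real.sqrt_pos.mpr (by linarith)
  have hsp0 : 0 < sp := Real.sqrt_pos.mpr (by linarith)
  have hsmsp : sm < sp := by
    apply Real.sqrt_lt_sqrt (by linarith) (by linarith)
  have hdm : Real.sqrt (1 - δ) ≤ sm := Real.sqrt_le_sqrt (by linarith)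
  have hdp : sp ≤ Real.sqrt (1 + δ) := Real.sqrt_le_sqrt (by linarith)
  set c2 : ℝ := γ₂ * (sp - sm) with hc2def
  set c3 : ℝ := γ₃ * (sp - sm) with hc3def
  set c4 : ℝ := γ₄ * (sp - sm) with hc4def
  have hc2 : 0 < c2 := mul_pos hγ₂ (sub_pos.mpr hsmsp)
  have hc3 : 0 < c3 := mul_pos hγ₃ (sub_pos.mpr hsmsp)
  have hc4 : 0 < c4 := mul_pos hγ₄ (sub_pos.mpr hsmsp)
  set M : ℝ := max 1 (max (4/c2) (max (4/c3) (4/c4))) with hMdef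
  have hM1 : (1:ℝ) ≤ M := le_max_left _ _
  have hM2 : 4/c2 ≤ M := le_trans (le_max_left _ _) (le_max_right _ _)
  have hM3 : 4/c3 ≤ M := le_trans (le_trans (le_max_left _ _) (le_max_right _ _)) (le_max_right _ _)
  have hM4 : 4/c4 ≤ M := le_trans (le_trans (le_max_right _ _) (le_max_right _ _)) (le_max_right _ _)
  have hM0 : (0:ℝ) < M := lt_of_lt_of_le one_pos hM1
  refine ⟨c2*c3*c4/64, by positivity, ⌈M^3⌉₊ + 1, ?_⟩
  intro B hB
  have hBM : M^3 ≤ (B:ℝ) := by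
    have h1 : ⌈M^3⌉₊ < B := lt_of_lt_of_le (Nat.lt_succ_self _) hB
    have h2 : ((⌈M^3⌉₊:ℕ):ℝ) ≤ (B:ℝ) := by exact_mod_cast h1.le
    exact le_trans (Nat.le_ceil _) h2
  have hB0 : (0:ℝ) < (B:ℝ) := lt_of_lt_of_le (pow_pos hM0 3) hBM
  set Y : ℝ := (B:ℝ)^((1:ℝ)/3) with hYdef
  set X : ℝ := (B:ℝ)^((2:ℝ)/3) with hXdef
  have hY0 : 0 < Y := Real.rpow_pos_of_pos hB0 _
  have hX0 : 0 < X := Real.rpow_pos_of_pos hB0 _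
  have hYM : M ≤ Y := by
    have h1 : (M^3)^((1:ℝ)/3) ≤ Y := by
      rw [hYdef]
      exact Real.rpow_le_rpow (by positivity) hBM (by norm_num)
    have h2 : (M^3:ℝ)^((1:ℝ)/3) = M := by
      rw [← Real.rpow_natCast M 3, ← Real.rpow_mul hM0.le]
      norm_num
    linarith [h2 ▸ h1]
  have hXY : X = Y^2 := by
    rw [hXdef, hYdef, show ((2:ℝ)/3) = (1:ℝ)/3*(2:ℕ) by norm_num,
      Real.rpow_mul (Nat.cast_nonneg B), Real.rpow_natCast]
  have hY3 : Y^3 = (B:ℝ) := by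
    rw [hYdef, ← Real.rpow_natCast ((B:ℝ)^((1:ℝ)/3)) 3, ← Real.rpow_mul (Nat.cast_nonneg B)]
    norm_num
  -- index sets
  set a2 : ℕ := ⌈γ₂*sm*Y/2⌉₊ with ha2def
  set b2 : ℕ := ⌊γ₂*sp*Y/2⌋₊ with hb2def
  set a3 : ℕ := ⌈γ₃*sm*Y⌉₊ with ha3def
  set b3 : ℕ := ⌊γ₃*sp*Y⌋₊ with hb3def
  set a4 : ℕ := ⌈γ₄*sm*Y/2⌉₊ with ha4def
  set b4 : ℕ := ⌊γ₄*sp*Y/2⌋₊ with hb4def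
  set T : Finset (ℕ×ℕ×ℕ) := (Finset.Icc a2 b2) ×ˢ (Finset.Icc a3 b3) ×ˢ (Finset.Icc a4 b4) with hTdef
  set f : ℕ×ℕ×ℕ → ℕ×ℕ×ℕ×ℕ := fun p =>
    ((-(β₁*(2*β₂*(p.1:ℤ)^2 + β₃*(p.2.1:ℤ)*(p.2.2:ℤ)))).toNat, 2*p.1, p.2.1, 2*p.2.2) with hfdef
  -- card lower bounds
  have hc2Y : (4:ℝ) ≤ c2*Y := by
    have := le_trans hM2 hYM
    rw [div_le_iff₀ hc2] at this; linarith
  have hc3Y : (4:ℝ) ≤ c3*Y := by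
    have := le_trans hM3 hYM
    rw [div_le_iff₀ hc3] at this; linarith
  have hc4Y : (4:ℝ) ≤ c4*Y := by
    have := le_trans hM4 hYM
    rw [div_le_iff₀ hc4] at this; linarith
  have hS2 : c2*Y/4 ≤ ((Finset.Icc a2 b2).card : ℝ) := by
    have h := icc_card_ge (γ₂*sm*Y/2) (γ₂*sp*Y/2) (by positivity)
    have he : γ₂*sp*Y/2 - γ₂*sm*Y/2 = c2*Y/2 := by rw [hc2def]; ring
    rw [ha2def, hb2def]; linarith
  have hS3 : c3*Y/4 ≤ ((Finset.Icc a3 b3).card : ℝ) := by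
    have h := icc_card_ge (γ₃*sm*Y) (γ₃*sp*Y) (by positivity)
    have he : γ₃*sp*Y - γ₃*sm*Y = c3*Y := by rw [hc3def]; ring
    rw [ha3def, hb3def]; linarith
  have hS4 : c4*Y/4 ≤ ((Finset.Icc a4 b4).card : ℝ) := by
    have h := icc_card_ge (γ₄*sm*Y/2) (γ₄*sp*Y/2) (by positivity)
    have he : γ₄*sp*Y/2 - γ₄*sm*Y/2 = c4*Y/2 := by rw [hc4def]; ring
    rw [ha4def, hb4def]; linarith
  -- membership of image points
  have key : ∀ p ∈ T, f p ∈ {m : ℕ × ℕ × ℕ × ℕ |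
            0 < m.1 ∧ 0 < m.2.1 ∧ 0 < m.2.2.1 ∧ 0 < m.2.2.2 ∧
            (γ₁ * (1 - δ) * X ≤ (m.1 : ℝ) ∧ (m.1 : ℝ) ≤ γ₁ * (1 + δ) * X) ∧
            (γ₂ * Real.sqrt (1 - δ) * Y ≤ (m.2.1 : ℝ) ∧ (m.2.1 : ℝ) ≤ γ₂ * Real.sqrt (1 + δ) * Y) ∧
            (γ₃ * Real.sqrt (1 - δ) * Y ≤ (m.2.2.1 : ℝ) ∧ (m.2.2.1 : ℝ) ≤ γ₃ * Real.sqrt (1 + δ) * Y) ∧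
            (γ₄ * Real.sqrt (1 - δ) * Y ≤ (m.2.2.2 : ℝ) ∧ (m.2.2.2 : ℝ) ≤ γ₄ * Real.sqrt (1 + δ) * Y) ∧
            2 * β₁ * (m.1 : ℤ) + β₂ * (m.2.1 : ℤ) ^ 2 + β₃ * (m.2.2.1 : ℤ) * (m.2.2.2 : ℤ) = 0} := by
    rintro ⟨k2, m3, k4⟩ hp
    obtain ⟨h2, h3, h4⟩ : k2 ∈ Finset.Icc a2 b2 ∧ m3 ∈ Finset.Icc a3 b3 ∧ k4 ∈ Finset.Icc a4 b4 := by
      simpa [hTdef, Finset.mem_product] using hp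
    obtain ⟨h2l, h2u⟩ := Finset.mem_Icc.mp h2
    obtain ⟨h3l, h3u⟩ := Finset.mem_Icc.mp h3
    obtain ⟨h4l, h4u⟩ := Finset.mem_Icc.mp h4
    -- real bounds on 2*k2, m3, 2*k4
    have hm2l : γ₂*sm*Y ≤ 2*(k2:ℝ) := by
      have := le_trans (Nat.le_ceil (γ₂*sm*Y/2)) (by exact_mod_cast h2l : ((a2:ℕ):ℝ) ≤ k2)
      linarith
    have hm2u : 2*(k2:ℝ) ≤ γ₂*sp*Y := by
      have := le_trans (by exact_mod_cast h2u : (k2:ℝ) ≤ (b2:ℕ)) (Nat.floor_le (by positivity))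
      linarith
    have hm3l : γ₃*sm*Y ≤ (m3:ℝ) :=
      le_trans (Nat.le_ceil _) (by exact_mod_cast h3l : ((a3:ℕ):ℝ) ≤ m3)
    have hm3u : (m3:ℝ) ≤ γ₃*sp*Y :=
      le_trans (by exact_mod_cast h3u : (m3:ℝ) ≤ (b3:ℕ)) (Nat.floor_le (by positivity))
    have hm4l : γ₄*sm*Y ≤ 2*(k4:ℝ) := by
      have := le_trans (Nat.le_ceil (γ₄*sm*Y/2)) (by exact_mod_cast h4l : ((a4:ℕ):ℝ) ≤ k4)
      linarith
    have hm4u : 2*(k4:ℝ) ≤ γ₄*sp*Y := by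
      have := le_trans (by exact_mod_cast h4u : (k4:ℝ) ≤ (b4:ℕ)) (Nat.floor_le (by positivity))
      linarith
    have hk2pos : 0 < k2 := by
      rcases Nat.eq_zero_or_pos k2 with h|h
      · exfalso; rw [h] at hm2l; push_cast at hm2l
        have hpos : 0 < γ₂*sm*Y := by positivity
        linarith
      · exact h
    have hm3pos : 0 < m3 := by
      rcases Nat.eq_zero_or_pos m3 with h|h
      · exfalso; rw [h] at hm3l; push_cast at hm3l
        have hpos : 0 < γ₃*sm*Y := by positivity
        linarith
      · exact h
    have hk4pos : 0 < k4 := by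
      rcases Nat.eq_zero_or_pos k4 with h|h
      · exfalso; rw [h] at hm4l; push_cast at hm4l
        have hpos : 0 < γ₄*sm*Y := by positivity
        linarith
      · exact h
    -- quadratic bounds
    have hAl : γ₂^2*X - ε*(γ₂^2*X) ≤ (2*(k2:ℝ))^2 := by
      have h := pow_le_pow_left₀ (by positivity) hm2l 2
      have he : (γ₂*sm*Y)^2 = γ₂^2*Y^2 - ε*(γ₂^2*Y^2) := by
        rw [mul_pow, mul_pow, hsm2]; ring
      rw [hXY]; linarith
    have hAu : (2*(k2:ℝ))^2 ≤ γ₂^2*X + ε*(γ₂^2*X) := by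
      have h := pow_le_pow_left₀ (by positivity) hm2u 2
      have he : (γ₂*sp*Y)^2 = γ₂^2*Y^2 + ε*(γ₂^2*Y^2) := by
        rw [mul_pow, mul_pow, hsp2]; ring
      rw [hXY]; linarith
    have hCl : γ₃*γ₄*X - ε*(γ₃*γ₄*X) ≤ (m3:ℝ)*(2*(k4:ℝ)) := by
      have h := mul_le_mul hm3l hm4l (by positivity) (le_trans (by positivity) hm3l)
      have hss : sm*sm = 1 - ε := by rw [← hsm2]; ring
      have he : (γ₃*sm*Y)*(γ₄*sm*Y) = γ₃*γ₄*Y^2 - ε*(γ₃*γ₄*Y^2) := by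
        linear_combination (γ₃*γ₄*Y^2) * hss
      rw [hXY]; linarith
    have hCu : (m3:ℝ)*(2*(k4:ℝ)) ≤ γ₃*γ₄*X + ε*(γ₃*γ₄*X) := by
      have h := mul_le_mul hm3u hm4u (le_trans (by positivity) hm4l) (by positivity)
      have hss : sp*sp = 1 + ε := by rw [← hsp2]; ring
      have he : (γ₃*sp*Y)*(γ₄*sp*Y) = γ₃*γ₄*Y^2 + ε*(γ₃*γ₄*Y^2) := by
        linear_combination (γ₃*γ₄*Y^2) * hss
      rw [hXY]; linarith
    set z : ℤ := -(β₁*(2*β₂*(k2:ℤ)^2 + β₃*(m3:ℤ)*(k4:ℤ))) with hzdef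
    have hεPX : ε*(γ₂^2*X) + ε*(γ₃*γ₄*X) ≤ δ*(γ₁*X) := by
      have h := mul_le_mul_of_nonneg_right hεP hX0.le
      rw [hPdef] at h; linarith [h]
    have hzr : ((z:ℤ):ℝ) = -((β₁:ℝ)*(2*(β₂:ℝ)*(k2:ℝ)^2 + (β₃:ℝ)*(m3:ℝ)*(k4:ℝ))) := by
      rw [hzdef]; push_cast; ring
    have hzb : γ₁*(1-δ)*X ≤ ((z:ℤ):ℝ) ∧ ((z:ℤ):ℝ) ≤ γ₁*(1+δ)*X := by
      have hrelX : (2*(β₁:ℝ)*γ₁ + (β₂:ℝ)*γ₂^2 + (β₃:ℝ)*γ₃*γ₄)*X = 0 := by rw [hrel]; ring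
      have hγ1X : (0:ℝ) < γ₁*X := by positivity
      have hγ22X : (0:ℝ) < γ₂^2*X := by positivity
      have hγ34X : (0:ℝ) < γ₃*γ₄*X := by positivity
      have hδγX : (0:ℝ) ≤ δ*(γ₁*X) := by positivity
      rcases hβ₁ with rfl|rfl <;> rcases hβ₂ with rfl|rfl <;> rcases hβ₃ with rfl|rfl <;>
        push_cast at hzr hrelX <;>
        constructor <;>
        linarith [hzr, hrelX, hAl, hAu, hCl, hCu, hεPX, hγ1X, hγ22X, hγ34X, hδγX]
    have hz0 : 0 ≤ z := by
      have h0 : (0:ℝ) < γ₁*(1-δ)*X := mul_pos (mul_pos hγ₁ (by linarith)) hX0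
      have : (0:ℝ) < ((z:ℤ):ℝ) := lt_of_lt_of_le h0 hzb.1
      exact_mod_cast this.le
    have htn : ((z.toNat : ℤ)) = z := Int.toNat_of_nonneg hz0
    have htnR : ((z.toNat : ℕ) : ℝ) = ((z:ℤ):ℝ) := by exact_mod_cast congrArg (Int.cast : ℤ → ℝ) htn
    have hm1pos : 0 < z.toNat := by
      have h0 : (0:ℝ) < γ₁*(1-δ)*X := mul_pos (mul_pos hγ₁ (by linarith)) hX0
      have h1 : (0:ℝ) < ((z.toNat:ℕ):ℝ) := by rw [htnR]; linarith [hzb.1]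
      exact_mod_cast h1
    refine ⟨?_, ?_, ?_, ?_, ⟨?_, ?_⟩, ⟨?_, ?_⟩, ⟨?_, ?_⟩, ⟨?_, ?_⟩, ?_⟩
    · exact hm1pos
    · simp [hfdef]; omega
    · exact hm3pos
    · simp [hfdef]; omega
    · show γ₁ * (1-δ) * X ≤ ((z.toNat:ℕ):ℝ); rw [htnR]; exact hzb.1
    · show ((z.toNat:ℕ):ℝ) ≤ γ₁ * (1+δ) * X; rw [htnR]; exact hzb.2
    · show γ₂ * Real.sqrt (1-δ) * Y ≤ ((2*k2:ℕ):ℝ)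
      push_cast
      have : γ₂ * Real.sqrt (1-δ) * Y ≤ γ₂ * sm * Y := by
        apply mul_le_mul_of_nonneg_right _ hY0.le
        exact mul_le_mul_of_nonneg_left hdm hγ₂.le
      linarith
    · show ((2*k2:ℕ):ℝ) ≤ γ₂ * Real.sqrt (1+δ) * Y
      push_cast
      have : γ₂ * sp * Y ≤ γ₂ * Real.sqrt (1+δ) * Y := by
        apply mul_le_mul_of_nonneg_right _ hY0.le
        exact mul_le_mul_of_nonneg_left hdp hγ₂.le
      linarith
    · show γ₃ * Real.sqrt (1-δ) * Y ≤ ((m3:ℕ):ℝ)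
      have : γ₃ * Real.sqrt (1-δ) * Y ≤ γ₃ * sm * Y := by
        apply mul_le_mul_of_nonneg_right _ hY0.le
        exact mul_le_mul_of_nonneg_left hdm hγ₃.le
      linarith
    · show ((m3:ℕ):ℝ) ≤ γ₃ * Real.sqrt (1+δ) * Y
      have : γ₃ * sp * Y ≤ γ₃ * Real.sqrt (1+δ) * Y := by
        apply mul_le_mul_of_nonneg_right _ hY0.le
        exact mul_le_mul_of_nonneg_left hdp hγ₃.le
      linarith
    · show γ₄ * Real.sqrt (1-δ) * Y ≤ ((2*k4:ℕ):ℝ)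
      push_cast
      have : γ₄ * Real.sqrt (1-δ) * Y ≤ γ₄ * sm * Y := by
        apply mul_le_mul_of_nonneg_right _ hY0.le
        exact mul_le_mul_of_nonneg_left hdm hγ₄.le
      linarith
    · show ((2*k4:ℕ):ℝ) ≤ γ₄ * Real.sqrt (1+δ) * Y
      push_cast
      have : γ₄ * sp * Y ≤ γ₄ * Real.sqrt (1+δ) * Y := by
        apply mul_le_mul_of_nonneg_right _ hY0.le
        exact mul_le_mul_of_nonneg_left hdp hγ₄.le
      linarith
    · show 2 * β₁ * ((z.toNat:ℕ):ℤ) + β₂ * ((2*k2:ℕ):ℤ)^2 + β₃ * ((m3:ℕ):ℤ) * ((2*k4:ℕ):ℤ) = 0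
      rw [htn, hzdef]
      rcases hβ₁ with rfl|rfl <;> push_cast <;> ring
  set S : Set (ℕ × ℕ × ℕ × ℕ) := {m : ℕ × ℕ × ℕ × ℕ |
            0 < m.1 ∧ 0 < m.2.1 ∧ 0 < m.2.2.1 ∧ 0 < m.2.2.2 ∧
            (γ₁ * (1 - δ) * X ≤ (m.1 : ℝ) ∧ (m.1 : ℝ) ≤ γ₁ * (1 + δ) * X) ∧
            (γ₂ * Real.sqrt (1 - δ) * Y ≤ (m.2.1 : ℝ) ∧ (m.2.1 : ℝ) ≤ γ₂ * Real.sqrt (1 + δ) * Y) ∧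
            (γ₃ * Real.sqrt (1 - δ) * Y ≤ (m.2.2.1 : ℝ) ∧ (m.2.2.1 : ℝ) ≤ γ₃ * Real.sqrt (1 + δ) * Y) ∧
            (γ₄ * Real.sqrt (1 - δ) * Y ≤ (m.2.2.2 : ℝ) ∧ (m.2.2.2 : ℝ) ≤ γ₄ * Real.sqrt (1 + δ) * Y) ∧
            2 * β₁ * (m.1 : ℤ) + β₂ * (m.2.1 : ℤ) ^ 2 + β₃ * (m.2.2.1 : ℤ) * (m.2.2.2 : ℤ) = 0} with hSdef
  have hinj : Set.InjOn f (T : Set (ℕ×ℕ×ℕ)) := by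
    rintro ⟨x1,x2,x3⟩ - ⟨y1,y2,y3⟩ - h
    simp only [hfdef, Prod.mk.injEq] at h
    obtain ⟨-, h1, h2, h3⟩ := h
    simp only [Prod.mk.injEq]
    omega
  have hfin : S.Finite := by
    rw [hSdef]
    apply Set.Finite.subset ((Set.finite_Iic ⌊γ₁*(1+δ)*X⌋₊).prod
      ((Set.finite_Iic ⌊γ₂*Real.sqrt (1+δ)*Y⌋₊).prod
      ((Set.finite_Iic ⌊γ₃*Real.sqrt (1+δ)*Y⌋₊).prod (Set.finite_Iic ⌊γ₄*Real.sqrt (1+δ)*Y⌋₊))))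
    rintro ⟨m1,m2,m3,m4⟩ hm
    simp only [Set.mem_setOf_eq] at hm
    obtain ⟨-,-,-,-,⟨-,h1⟩,⟨-,h2⟩,⟨-,h3⟩,⟨-,h4⟩,-⟩ := hm
    exact ⟨Nat.le_floor h1, Nat.le_floor h2, Nat.le_floor h3, Nat.le_floor h4⟩
  have hcard : c2*c3*c4/64 * (B:ℝ) ≤ (T.card : ℝ) := by
    rw [hTdef, Finset.card_product, Finset.card_product]
    push_cast
    calc c2*c3*c4/64 * (B:ℝ) = (c2*Y/4)*((c3*Y/4)*(c4*Y/4)) := by rw [← hY3]; ring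
    _ ≤ ((Finset.Icc a2 b2).card : ℝ) * (((Finset.Icc a3 b3).card : ℝ) * ((Finset.Icc a4 b4).card : ℝ)) := by
        apply mul_le_mul hS2 _ (by positivity) (Nat.cast_nonneg _)
        exact mul_le_mul hS3 hS4 (by positivity) (Nat.cast_nonneg _)
  have himg : (T.image f).card = T.card := Finset.card_image_of_injOn hinj
  have hsub : ↑(T.image f) ⊆ S := by
    intro m hm
    simp only [Finset.coe_image, Set.mem_image, Finset.mem_coe] at hm
    obtain ⟨p, hp, rfl⟩ := hm
    exact key p hp
  have hle : (T.image f).card ≤ S.ncard := by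
    rw [← Set.ncard_coe_finset]
    exact Set.ncard_le_ncard hsub hfin
  calc c2*c3*c4/64 * (B:ℝ) ≤ (T.card : ℝ) := hcard
  _ = ((T.image f).card : ℝ) := by rw [himg]
  _ ≤ (S.ncard : ℝ) := by exact_mod_cast hle
end

section
/- Let β₁, β₂, β₃, β₄, β₅ ∈ {−1, 1} and let p₁, p₂, p₃, p₄, p₅ be primes satisfying β₂p₂ + β₃p₃ + 2β₄p₄ = 0 and β₁p₁ + 2β₄p₄ − β₅p₅ = 0. Set x₀ = 2β₂β₃β₄p₂p₃p₄, x₁ = β₂p₁²p₂, x₂ = β₃p₁²p₃, x₃ = p₁²(β₁p₁ + 2β₄p₄). Then x₀(x₁+x₂+x₃)² + x₁x₂(x₁+x₂) = 0, the product x₀x₁x₂x₃ is nonzero, and Ω(|x₀x₁x₂x₃|) = 13, where Ω(n) denotes the number of prime factors of n counted with multiplicity. -/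
/-- Parametrised almost prime points on the `D₄` (second isomorphy class) surface `X₂`. -/
theorem stmt_17 (β₁ β₂ β₃ β₄ β₅ : ℤ)
    (hβ₁ : β₁ = 1 ∨ β₁ = -1) (hβ₂ : β₂ = 1 ∨ β₂ = -1) (hβ₃ : β₃ = 1 ∨ β₃ = -1)
    (hβ₄ : β₄ = 1 ∨ β₄ = -1) (hβ₅ : β₅ = 1 ∨ β₅ = -1)
    (p₁ p₂ p₃ p₄ p₅ : ℕ)
    (hp₁ : p₁.Prime) (hp₂ : p₂.Prime) (hp₃ : p₃.Prime) (hp₄ : p₄.Prime) (hp₅ : p₅.Prime)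
    (h1 : β₂ * (p₂ : ℤ) + β₃ * (p₃ : ℤ) + 2 * β₄ * (p₄ : ℤ) = 0)
    (h2 : β₁ * (p₁ : ℤ) + 2 * β₄ * (p₄ : ℤ) - β₅ * (p₅ : ℤ) = 0)
    (x₀ x₁ x₂ x₃ : ℤ)
    (hx₀ : x₀ = 2 * β₂ * β₃ * β₄ * (p₂ : ℤ) * (p₃ : ℤ) * (p₄ : ℤ))
    (hx₁ : x₁ = β₂ * (p₁ : ℤ) ^ 2 * (p₂ : ℤ))
    (hx₂ : x₂ = β₃ * (p₁ : ℤ) ^ 2 * (p₃ : ℤ))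
    (hx₃ : x₃ = (p₁ : ℤ) ^ 2 * (β₁ * (p₁ : ℤ) + 2 * β₄ * (p₄ : ℤ))) :
    x₀ * (x₁ + x₂ + x₃) ^ 2 + x₁ * x₂ * (x₁ + x₂) = 0 ∧
    x₀ * x₁ * x₂ * x₃ ≠ 0 ∧
    ArithmeticFunction.cardFactors (x₀ * x₁ * x₂ * x₃).natAbs = 13 := by
  have hb1 : β₁ ^ 2 = 1 := by rcases hβ₁ with h | h <;> simp [h]
  have hx₃' : x₃ = β₅ * (p₁ : ℤ) ^ 2 * (p₅ : ℤ) := by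
    rw [hx₃]; linear_combination (p₁ : ℤ) ^ 2 * h2
  have hS : x₁ + x₂ + x₃ = (p₁ : ℤ) ^ 2 * (β₁ * p₁) := by
    rw [hx₁, hx₂, hx₃]; linear_combination (p₁ : ℤ) ^ 2 * h1
  have hS12 : x₁ + x₂ = -(2 * β₄ * (p₄ : ℤ)) * (p₁ : ℤ) ^ 2 := by
    rw [hx₁, hx₂]; linear_combination (p₁ : ℤ) ^ 2 * h1
  have heq : x₀ * (x₁ + x₂ + x₃) ^ 2 + x₁ * x₂ * (x₁ + x₂) = 0 := by
    rw [hS, hS12, hx₀, hx₁, hx₂]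
    linear_combination (2 * β₂ * β₃ * β₄ * (p₂ : ℤ) * p₃ * p₄ * (p₁ : ℤ) ^ 6) * hb1
  have hprod : x₀ * x₁ * x₂ * x₃ =
      (β₄ * β₅) * ((2 * p₁ ^ 6 * p₂ ^ 2 * p₃ ^ 2 * p₄ * p₅ : ℕ) : ℤ) := by
    rw [hx₀, hx₁, hx₂, hx₃']
    rcases hβ₂ with h | h <;> rcases hβ₃ with h' | h' <;> subst h h' <;> push_cast <;> ring
  have n1 : p₁ ≠ 0 := hp₁.pos.ne'
  have n2 : p₂ ≠ 0 := hp₂.pos.ne'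
  have n3 : p₃ ≠ 0 := hp₃.pos.ne'
  have n4 : p₄ ≠ 0 := hp₄.pos.ne'
  have n5 : p₅ ≠ 0 := hp₅.pos.ne'
  have e1 : (2 : ℕ) * p₁ ^ 6 ≠ 0 := mul_ne_zero two_ne_zero (pow_ne_zero _ n1)
  have e2 : (2 : ℕ) * p₁ ^ 6 * p₂ ^ 2 ≠ 0 := mul_ne_zero e1 (pow_ne_zero _ n2)
  have e3 : (2 : ℕ) * p₁ ^ 6 * p₂ ^ 2 * p₃ ^ 2 ≠ 0 := mul_ne_zero e2 (pow_ne_zero _ n3)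
  have e4 : (2 : ℕ) * p₁ ^ 6 * p₂ ^ 2 * p₃ ^ 2 * p₄ ≠ 0 := mul_ne_zero e3 n4
  have hN0 : (2 * p₁ ^ 6 * p₂ ^ 2 * p₃ ^ 2 * p₄ * p₅ : ℕ) ≠ 0 := mul_ne_zero e4 n5
  have hna : (x₀ * x₁ * x₂ * x₃).natAbs = 2 * p₁ ^ 6 * p₂ ^ 2 * p₃ ^ 2 * p₄ * p₅ := by
    rcases hβ₄ with h | h <;> rcases hβ₅ with h' | h' <;> rw [hprod, h, h'] <;>
      simp only [one_mul, mul_one, neg_mul, mul_neg, neg_neg, Int.natAbs_neg, Int.natAbs_natCast]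
  refine ⟨heq, ?_, ?_⟩
  · intro h
    rw [h] at hna
    exact hN0 (by simpa using hna.symm)
  · rw [hna]
    have h2' : (2 : ℕ).Prime := Nat.prime_two
    rw [ArithmeticFunction.cardFactors_mul e4 n5,
      ArithmeticFunction.cardFactors_mul e3 n4,
      ArithmeticFunction.cardFactors_mul e2 (pow_ne_zero _ n3),
      ArithmeticFunction.cardFactors_mul e1 (pow_ne_zero _ n2),
      ArithmeticFunction.cardFactors_mul two_ne_zero (pow_ne_zero _ n1),
      ArithmeticFunction.cardFactors_apply_prime h2',
      ArithmeticFunction.cardFactors_apply_prime_pow hp₁,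
      ArithmeticFunction.cardFactors_apply_prime_pow hp₂,
      ArithmeticFunction.cardFactors_apply_prime_pow hp₃,
      ArithmeticFunction.cardFactors_apply_prime hp₄,
      ArithmeticFunction.cardFactors_apply_prime hp₅]
end

section
/- Let β₁, β₂, β₃, β₄ ∈ {−1, 1} and let p₁, p₂, p₃, p₄ be primes satisfying 2β₄p₄ + β₁β₂p₁p₂ + p₃² = 0. Set x₀ = β₁p₁³, x₁ = β₃p₁²p₃, x₂ = β₂p₁²p₂, x₃ = 2β₂β₄p₂p₄. Then x₃x₀² + x₀x₂² + x₁²x₂ = 0, the product x₀x₁x₂x₃ is nonzero, and Ω(|x₀x₁x₂x₃|) = 12, where Ω(n) denotes the number of prime factors of n counted with multiplicity. -/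
/-- Parametrised almost prime points on the `D₅` surface `X₆`. -/
theorem stmt_18 (β₁ β₂ β₃ β₄ : ℤ)
    (hβ₁ : β₁ = 1 ∨ β₁ = -1) (hβ₂ : β₂ = 1 ∨ β₂ = -1)
    (hβ₃ : β₃ = 1 ∨ β₃ = -1) (hβ₄ : β₄ = 1 ∨ β₄ = -1)
    (p₁ p₂ p₃ p₄ : ℕ)
    (hp₁ : p₁.Prime) (hp₂ : p₂.Prime) (hp₃ : p₃.Prime) (hp₄ : p₄.Prime)
    (h1 : 2 * β₄ * (p₄ : ℤ) + β₁ * β₂ * (p₁ : ℤ) * (p₂ : ℤ) + (p₃ : ℤ) ^ 2 = 0)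
    (x₀ x₁ x₂ x₃ : ℤ)
    (hx₀ : x₀ = β₁ * (p₁ : ℤ) ^ 3)
    (hx₁ : x₁ = β₃ * (p₁ : ℤ) ^ 2 * (p₃ : ℤ))
    (hx₂ : x₂ = β₂ * (p₁ : ℤ) ^ 2 * (p₂ : ℤ))
    (hx₃ : x₃ = 2 * β₂ * β₄ * (p₂ : ℤ) * (p₄ : ℤ)) :
    x₃ * x₀ ^ 2 + x₀ * x₂ ^ 2 + x₁ ^ 2 * x₂ = 0 ∧
    x₀ * x₁ * x₂ * x₃ ≠ 0 ∧
    ArithmeticFunction.cardFactors (x₀ * x₁ * x₂ * x₃).natAbs = 12 := by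
  have h₁sq : β₁ ^ 2 = 1 := by rcases hβ₁ with h | h <;> simp [h]
  have h₂sq : β₂ ^ 2 = 1 := by rcases hβ₂ with h | h <;> simp [h]
  have h₃sq : β₃ ^ 2 = 1 := by rcases hβ₃ with h | h <;> simp [h]
  have h₄sq : β₄ ^ 2 = 1 := by rcases hβ₄ with h | h <;> simp [h]
  have h₁ab : β₁.natAbs = 1 := by rcases hβ₁ with h | h <;> simp [h]
  have h₂ab : β₂.natAbs = 1 := by rcases hβ₂ with h | h <;> simp [h]
  have h₃ab : β₃.natAbs = 1 := by rcases hβ₃ with h | h <;> simp [h]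
  have h₄ab : β₄.natAbs = 1 := by rcases hβ₄ with h | h <;> simp [h]
  have key : (x₀ * x₁ * x₂ * x₃).natAbs = 2 * p₁ ^ 7 * p₂ ^ 2 * p₃ * p₄ := by
    subst hx₀ hx₁ hx₂ hx₃
    simp only [Int.natAbs_mul, Int.natAbs_pow, h₁ab, h₂ab, h₃ab, h₄ab,
      Int.natAbs_natCast]
    ring
  have n1 : p₁ ^ 7 ≠ 0 := pow_ne_zero _ hp₁.ne_zero
  have n2 : p₂ ^ 2 ≠ 0 := pow_ne_zero _ hp₂.ne_zero
  have hne : 2 * p₁ ^ 7 * p₂ ^ 2 * p₃ * p₄ ≠ 0 :=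
    Nat.mul_ne_zero (Nat.mul_ne_zero (Nat.mul_ne_zero (Nat.mul_ne_zero two_ne_zero n1) n2)
      hp₃.ne_zero) hp₄.ne_zero
  refine ⟨?_, ?_, ?_⟩
  · subst hx₀ hx₁ hx₂ hx₃
    linear_combination (β₂ * (p₁ : ℤ) ^ 6 * p₂) * h1 +
      (2 * β₂ * β₄ * (p₂ : ℤ) * p₄ * (p₁ : ℤ) ^ 6) * h₁sq +
      (β₂ * (p₁ : ℤ) ^ 6 * p₂ * (p₃ : ℤ) ^ 2) * h₃sq
  · intro h
    rw [← Int.natAbs_eq_zero] at h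
    rw [key] at h
    exact hne h
  · rw [key]
    rw [ArithmeticFunction.cardFactors_mul (Nat.mul_ne_zero (Nat.mul_ne_zero
        (Nat.mul_ne_zero two_ne_zero n1) n2) hp₃.ne_zero) hp₄.ne_zero,
      ArithmeticFunction.cardFactors_mul (Nat.mul_ne_zero (Nat.mul_ne_zero two_ne_zero n1) n2)
        hp₃.ne_zero,
      ArithmeticFunction.cardFactors_mul (Nat.mul_ne_zero two_ne_zero n1) n2,
      ArithmeticFunction.cardFactors_mul (by norm_num) n1,
      ArithmeticFunction.cardFactors_apply_prime_pow hp₁,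
      ArithmeticFunction.cardFactors_apply_prime_pow hp₂,
      ArithmeticFunction.cardFactors_apply_prime hp₃,
      ArithmeticFunction.cardFactors_apply_prime hp₄,
      ArithmeticFunction.cardFactors_apply_prime Nat.prime_two]
end

section
/- Let β₁, β₂, β₃, β₄ ∈ {−1, 1} and let p₁, p₂, p₃, p₄ be primes satisfying 2β₃p₃ + β₁p₁ + β₂p₂ = 0. Set x₀ = β₄p₁²p₂²p₄³, x₁ = 2β₃p₃p₄⁶, x₂ = β₁p₁³p₂⁴, x₃ = β₂p₁²p₂³p₄². Then x₁x₂² + x₂x₀² + x₃³ = 0, the product x₀x₁x₂x₃ is nonzero, and Ω(|x₀x₁x₂x₃|) = 29, where Ω(n) denotes the number of prime factors of n counted with multiplicity. -/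
open ArithmeticFunction in
lemma omega_aux {p₁ p₂ p₃ p₄ : ℕ} (hp₁ : p₁.Prime) (hp₂ : p₂.Prime)
    (hp₃ : p₃.Prime) (hp₄ : p₄.Prime) :
    cardFactors (2 * p₁ ^ 7 * p₂ ^ 9 * p₃ * p₄ ^ 11) = 29 := by
  have h1 := hp₁.pos.ne'
  have h2 := hp₂.pos.ne'
  have h3 := hp₃.pos.ne'
  have h4 := hp₄.pos.ne'
  rw [cardFactors_mul (by positivity) (by positivity),
      cardFactors_mul (by positivity) (by positivity),
      cardFactors_mul (by positivity) (by positivity),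
      cardFactors_mul (by positivity) (by positivity),
      cardFactors_apply_prime_pow hp₁, cardFactors_apply_prime_pow hp₂,
      cardFactors_apply_prime_pow hp₄, cardFactors_apply_prime hp₃,
      cardFactors_apply_prime Nat.prime_two]

/-- Parametrised almost prime points on the `E₆` surface `X₈`. -/
theorem stmt_19 (β₁ β₂ β₃ β₄ : ℤ)
    (hβ₁ : β₁ = 1 ∨ β₁ = -1) (hβ₂ : β₂ = 1 ∨ β₂ = -1)
    (hβ₃ : β₃ = 1 ∨ β₃ = -1) (hβ₄ : β₄ = 1 ∨ β₄ = -1)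
    (p₁ p₂ p₃ p₄ : ℕ)
    (hp₁ : p₁.Prime) (hp₂ : p₂.Prime) (hp₃ : p₃.Prime) (hp₄ : p₄.Prime)
    (h1 : 2 * β₃ * (p₃ : ℤ) + β₁ * (p₁ : ℤ) + β₂ * (p₂ : ℤ) = 0)
    (x₀ x₁ x₂ x₃ : ℤ)
    (hx₀ : x₀ = β₄ * (p₁ : ℤ) ^ 2 * (p₂ : ℤ) ^ 2 * (p₄ : ℤ) ^ 3)
    (hx₁ : x₁ = 2 * β₃ * (p₃ : ℤ) * (p₄ : ℤ) ^ 6)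
    (hx₂ : x₂ = β₁ * (p₁ : ℤ) ^ 3 * (p₂ : ℤ) ^ 4)
    (hx₃ : x₃ = β₂ * (p₁ : ℤ) ^ 2 * (p₂ : ℤ) ^ 3 * (p₄ : ℤ) ^ 2) :
    x₁ * x₂ ^ 2 + x₂ * x₀ ^ 2 + x₃ ^ 3 = 0 ∧
    x₀ * x₁ * x₂ * x₃ ≠ 0 ∧
    ArithmeticFunction.cardFactors (x₀ * x₁ * x₂ * x₃).natAbs = 29 := by
  subst hx₀ hx₁ hx₂ hx₃
  have hb1 : β₁ ^ 2 = 1 := by rcases hβ₁ with rfl | rfl <;> norm_num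
  have hb2 : β₂ ^ 2 = 1 := by rcases hβ₂ with rfl | rfl <;> norm_num
  have hb4 : β₄ ^ 2 = 1 := by rcases hβ₄ with rfl | rfl <;> norm_num
  refine ⟨?_, ?_, ?_⟩
  · linear_combination ((p₁:ℤ)^6 * (p₂:ℤ)^8 * (p₄:ℤ)^6) * h1 +
      (2 * β₃ * (p₃:ℤ) * (p₄:ℤ)^6 * (p₁:ℤ)^6 * (p₂:ℤ)^8) * hb1 +
      ((p₁:ℤ)^7 * (p₂:ℤ)^8 * (p₄:ℤ)^6 * β₁) * hb4 +
      ((p₁:ℤ)^6 * (p₂:ℤ)^9 * (p₄:ℤ)^6 * β₂) * hb2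
  · have h1' := hp₁.pos
    have h2' := hp₂.pos
    have h3' := hp₃.pos
    have h4' := hp₄.pos
    rcases hβ₁ with rfl | rfl <;> rcases hβ₂ with rfl | rfl <;>
      rcases hβ₃ with rfl | rfl <;> rcases hβ₄ with rfl | rfl <;>
      positivity
  · have key : ((β₄ * (p₁:ℤ)^2 * (p₂:ℤ)^2 * (p₄:ℤ)^3) * (2 * β₃ * (p₃:ℤ) * (p₄:ℤ)^6) *
        (β₁ * (p₁:ℤ)^3 * (p₂:ℤ)^4) * (β₂ * (p₁:ℤ)^2 * (p₂:ℤ)^3 * (p₄:ℤ)^2)) =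
        (β₄ * β₃ * β₁ * β₂) * ((2 * p₁ ^ 7 * p₂ ^ 9 * p₃ * p₄ ^ 11 : ℕ) : ℤ) := by
      push_cast; ring
    have hsign : (β₄ * β₃ * β₁ * β₂).natAbs = 1 := by
      rcases hβ₁ with rfl | rfl <;> rcases hβ₂ with rfl | rfl <;>
        rcases hβ₃ with rfl | rfl <;> rcases hβ₄ with rfl | rfl <;> rfl
    rw [key, Int.natAbs_mul, hsign, one_mul, Int.natAbs_natCast]
    exact omega_aux hp₁ hp₂ hp₃ hp₄
end
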